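/- arXiv:math/0306357 — 4 statements merged into one kernel-verified Lean document; each statement's English description precedes it below -/
import Mathlib

section
/- Let h > 0 and t ∈ ℝ. Let p and q be real polynomials of degree at most 5 such that for every r = 0, 1, 2, 3, 4 the r-th derivative of p and of q agree at t. Then 8·h·(q'(t+h) − p'(t−h)) − h²·(p''(t−h) − 6·p''(t) + q''(t+h)) = 20·(p(t−h) − 2·p(t) + q(t+h)). -/
/-!
Expand `p` about `t` at `t - h` and `q` about `t` at `t + h`, together with their first and
second derivatives. Since both have degree at most 5 these Taylor expansions are exact, and by the
joining conditions they involve only the common values of the derivatives of orders 0 to 4 at `t`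
and the two fifth derivatives. The identity is then a polynomial identity in `h` and these values.
-/

open Polynomial

theorem Polynomial.eval_add_eq_sum_range_iterate_derivative {K : Type*} [Field K] [CharZero K]
    {f : K[X]} {n : ℕ} (hf : f.natDegree ≤ n) (t s : K) :
    f.eval (t + s) =
      ∑ i ∈ Finset.range (n + 1), (derivative^[i] f).eval t * s ^ i / (i.factorial : K) := by
  rw [add_comm, ← taylor_eval,
    eval_eq_sum_range' (n := n + 1) (by rw [natDegree_taylor]; omega)]
  refine Finset.sum_congr rfl fun i _ => ?_
  rw [taylor_coeff, ← factorial_smul_hasseDeriv, LinearMap.smul_apply, nsmul_eq_mul, eval_mul,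
    eval_natCast, mul_assoc, mul_div_cancel_left₀ _ (Nat.cast_ne_zero.mpr i.factorial_ne_zero)]

theorem Polynomial.eval_iterate_derivative_add_eq_sum_range {K : Type*} [Field K] [CharZero K]
    {f : K[X]} {n : ℕ} (hf : f.natDegree ≤ n) (k : ℕ) (t s : K) :
    (derivative^[k] f).eval (t + s) =
      ∑ i ∈ Finset.range (n - k + 1), (derivative^[i + k] f).eval t * s ^ i / (i.factorial : K) := by
  rw [eval_add_eq_sum_range_iterate_derivative
    ((natDegree_iterate_derivative f k).trans (Nat.sub_le_sub_right hf k))]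
  simp only [Function.iterate_add_apply]

theorem quintic_spline_identity_2_15_general (h t : ℝ)
    (p q : Polynomial ℝ) (hp : p.degree ≤ 5) (hq : q.degree ≤ 5)
    (hjoin : ∀ r : ℕ, r ≤ 4 →
      (derivative^[r] p).eval t = (derivative^[r] q).eval t) :
    8 * h * ((derivative q).eval (t + h) - (derivative p).eval (t - h))
      - h ^ 2 * ((derivative^[2] p).eval (t - h)
        - 6 * (derivative^[2] p).eval t + (derivative^[2] q).eval (t + h))
      = 20 * (p.eval (t - h) - 2 * p.eval t + q.eval (t + h)) := by
  have taylor_p := eval_iterate_derivative_add_eq_sum_range (natDegree_le_iff_degree_le.mpr hp)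
  have taylor_q := eval_iterate_derivative_add_eq_sum_range (natDegree_le_iff_degree_le.mpr hq)
  have hp0 := taylor_p 0 t (-h)
  have hp1 := taylor_p 1 t (-h)
  have hp2 := taylor_p 2 t (-h)
  have hq0 := taylor_q 0 t h
  have hq1 := taylor_q 1 t h
  have hq2 := taylor_q 2 t h
  have hj0 := hjoin 0 (by norm_num)
  have hj1 := hjoin 1 (by norm_num)
  have hj2 := hjoin 2 (by norm_num)
  have hj3 := hjoin 3 (by norm_num)
  have hj4 := hjoin 4 (by norm_num)
  simp only [Finset.sum_range_succ, Finset.sum_range_zero, Nat.reduceAdd, Nat.reduceSub,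
    Function.iterate_zero_apply, Function.iterate_one] at hp0 hp1 hp2 hq0 hq1 hq2 hj0 hj1
  rw [sub_eq_add_neg t h, hp0, hp1, hp2, hq0, hq1, hq2, hj0, hj1, hj2, hj3, hj4]
  simp only [Nat.factorial]
  ring

theorem quintic_spline_identity_2_15 (h t : ℝ) (hh : 0 < h)
    (p q : Polynomial ℝ) (hp : p.degree ≤ 5) (hq : q.degree ≤ 5)
    (hjoin : ∀ r : ℕ, r ≤ 4 →
      (derivative^[r] p).eval t = (derivative^[r] q).eval t) :
    8 * h * ((derivative q).eval (t + h) - (derivative p).eval (t - h))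
      - h ^ 2 * ((derivative^[2] p).eval (t - h)
        - 6 * (derivative^[2] p).eval t + (derivative^[2] q).eval (t + h))
      = 20 * (p.eval (t - h) - 2 * p.eval t + q.eval (t + h)) :=
  quintic_spline_identity_2_15_general h t p q hp hq hjoin
end

section
/- Let h > 0 and t ∈ ℝ. Let p and q be real polynomials of degree at most 5 such that for every r = 0, 1, 2, 3, 4 the r-th derivative of p and of q agree at t. Then p''''(t) = −(3/(2h²))·(p''(t−h) + 18·p''(t) + q''(t+h)) + (30/h⁴)·(p(t−h) − 2·p(t) + q(t+h)). -/
/-! Taylor expansion about `t` is exact for quintics. By the join conditions `p` and `q` differ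
only in their fifth derivatives at `t`, whose contributions cancel since
`(30 / h⁴) · h⁵ / 5! = (3 / (2h²)) · h³ / 3!`; the even-order terms that remain give the identity. -/

open Polynomial

namespace Polynomial

variable {K : Type*} [Field K] [CharZero K]

theorem eval_hasseDeriv_eq_eval_iterate_derivative_div (k : ℕ) (f : K[X]) (t : K) :
    (hasseDeriv k f).eval t = (derivative^[k] f).eval t / k.factorial := by
  rw [← factorial_smul_hasseDeriv, LinearMap.smul_apply, eval_smul, nsmul_eq_mul,
    mul_div_cancel_left₀ _ (Nat.cast_ne_zero.mpr k.factorial_ne_zero)]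

theorem eval_add_eq_sum_range_iterate_derivative_s8 {f : K[X]} {n : ℕ} (hf : f.natDegree ≤ n)
    (t x : K) :
    f.eval (t + x) =
      ∑ k ∈ Finset.range (n + 1), (derivative^[k] f).eval t * x ^ k / k.factorial := by
  rw [add_comm, ← taylor_eval, eval_eq_sum_range' (n := n + 1) (by rw [natDegree_taylor]; omega)]
  refine Finset.sum_congr rfl fun k _ => ?_
  rw [taylor_coeff, eval_hasseDeriv_eq_eval_iterate_derivative_div, div_mul_eq_mul_div]

theorem eval_iterate_derivative_add_eq_sum_range_s8 {f : K[X]} {m n : ℕ}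
    (hf : f.natDegree ≤ n + m) (t x : K) :
    (derivative^[m] f).eval (t + x) =
      ∑ k ∈ Finset.range (n + 1), (derivative^[k + m] f).eval t * x ^ k / k.factorial := by
  simp only [Function.iterate_add_apply]
  exact eval_add_eq_sum_range_iterate_derivative_s8
    ((natDegree_iterate_derivative f m).trans (by omega)) t x

end Polynomial

theorem quintic_spline_identity_2_21 (h t : ℝ) (hh : 0 < h)
    (p q : Polynomial ℝ) (hp : p.degree ≤ 5) (hq : q.degree ≤ 5)
    (hjoin : ∀ r : ℕ, r ≤ 4 →
      (derivative^[r] p).eval t = (derivative^[r] q).eval t) :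
    (derivative^[4] p).eval t =
      -(3 / (2 * h ^ 2)) * ((derivative^[2] p).eval (t - h)
        + 18 * (derivative^[2] p).eval t + (derivative^[2] q).eval (t + h))
      + (30 / h ^ 4) * (p.eval (t - h) - 2 * p.eval t + q.eval (t + h)) := by
  have hp5 : p.natDegree ≤ 5 := natDegree_le_iff_degree_le.mpr hp
  have hq5 : q.natDegree ≤ 5 := natDegree_le_iff_degree_le.mpr hq
  rw [sub_eq_add_neg, eval_add_eq_sum_range_iterate_derivative_s8 hp5,
    eval_add_eq_sum_range_iterate_derivative_s8 hq5,
    eval_iterate_derivative_add_eq_sum_range_s8 (n := 3) hp5,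
    eval_iterate_derivative_add_eq_sum_range_s8 (n := 3) hq5]
  simp only [Finset.sum_range_succ, Finset.sum_range_zero, Nat.reduceAdd]
  rw [← hjoin 0 (by norm_num), ← hjoin 1 (by norm_num), ← hjoin 2 (by norm_num),
    ← hjoin 3 (by norm_num), ← hjoin 4 (by norm_num)]
  simp only [Function.iterate_zero_apply, Nat.factorial]
  field_simp
  ring
end

section
/- Let h > 0 and t ∈ ℝ, and set t_j = t + j·h for j = −2, −1, 0, 1, 2. Let p₁, p₂, p₃, p₄ be real polynomials of degree at most 5 such that for every r = 0, 1, 2, 3, 4: the r-th derivatives of p₁ and p₂ agree at t₋₁, the r-th derivatives of p₂ and p₃ agree at t₀, and the r-th derivatives of p₃ and p₄ agree at t₁. Then p₁'''(t₋₂) + 26·p₂'''(t₋₁) + 66·p₃'''(t₀) + 26·p₄'''(t₁) + p₄'''(t₂) = (60/h³)·(−p₁(t₋₂) + 2·p₂(t₋₁) − 2·p₄(t₁) + p₄(t₂)). -/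
/-!
The difference of two adjacent pieces is a quintic whose derivatives of order `≤ 4` vanish at
the common knot `c`, hence a multiple `a (X - c)⁵`. So `p₂, p₃, p₄` are `p₁` plus multiples of
fifth powers centred at the three interior knots, and both sides of the identity are linear in
these data. For `p₁` itself the identity is exact on quintics (Taylor expansion at `t`); each
fifth-power term is only sampled on the side of its knot where it is present, and there the
identity is checked by direct evaluation.
-/

open Polynomial Finset

namespace Polynomial

variable {R : Type*}

theorem exists_eq_C_mul_X_sub_C_pow_of_iterate_derivative_eval_eq_zero [Field R] [CharZero R]
    {p : R[X]} {n : ℕ} {c : R} (hp : p.degree ≤ n)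
    (hvanish : ∀ r < n, (derivative^[r] p).eval c = 0) : ∃ a, p = C a * (X - C c) ^ n := by
  have hdvd : (X - C c) ^ n ∣ p := by
    rcases eq_or_ne p 0 with rfl | hp0
    · exact dvd_zero _
    rw [← le_rootMultiplicity_iff hp0]
    cases n with
    | zero => exact Nat.zero_le _
    | succ m =>
      exact (lt_rootMultiplicity_iff_isRoot_iterate_derivative hp0).2 fun r hr ↦
        hvanish r (by omega)
  obtain ⟨g, rfl⟩ := hdvd
  have hg : g.natDegree = 0 := by
    rcases eq_or_ne g 0 with rfl | hg0
    · exact natDegree_zero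
    have := natDegree_le_of_degree_le hp
    rw [natDegree_mul (pow_ne_zero _ (X_sub_C_ne_zero c)) hg0, natDegree_pow,
      natDegree_X_sub_C] at this
    omega
  exact ⟨g.coeff 0, by rw [mul_comm, ← eq_C_of_natDegree_eq_zero hg]⟩

theorem exists_eq_add_C_mul_X_sub_C_pow_of_iterate_derivative_eval_eq [Field R] [CharZero R]
    {p q : R[X]} {n : ℕ} {c : R} (hp : p.degree ≤ n) (hq : q.degree ≤ n)
    (hagree : ∀ r < n, (derivative^[r] p).eval c = (derivative^[r] q).eval c) :
    ∃ a, q = p + C a * (X - C c) ^ n := by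
  obtain ⟨a, ha⟩ := exists_eq_C_mul_X_sub_C_pow_of_iterate_derivative_eval_eq_zero (c := c)
    ((degree_sub_le q p).trans (max_le hq hp)) fun r hr ↦ by
      rw [iterate_derivative_sub, eval_sub, hagree r hr, sub_self]
  exact ⟨a, by rw [← ha, add_sub_cancel]⟩

theorem eq_sum_range_C_mul_X_sub_C_pow [CommRing R] {p : R[X]} {n : ℕ} (hp : p.natDegree ≤ n)
    (c : R) : p = ∑ i ∈ range (n + 1), C ((taylor c p).coeff i) * (X - C c) ^ i := by
  conv_lhs => rw [← sum_taylor_eq p c]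
  exact sum_over_range' _ (by simp) (n + 1) (by rw [natDegree_taylor]; omega)

theorem eval_iterate_derivative_C_mul_X_sub_C_pow [CommRing R] (a c x : R) (n k : ℕ) :
    (derivative^[k] (C a * (X - C c) ^ n)).eval x =
      a * n.descFactorial k * (x - c) ^ (n - k) := by
  simp [iterate_derivative_C_mul, iterate_derivative_X_sub_pow, mul_assoc]

end Polynomial

theorem quintic_third_derivative_stencil {R : Type*} [CommRing R] {p : R[X]} (hp : p.degree ≤ 5)
    (x h : R) :
    ((derivative^[3] p).eval (x - 2 * h) + 26 * (derivative^[3] p).eval (x - h)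
      + 66 * (derivative^[3] p).eval x + 26 * (derivative^[3] p).eval (x + h)
      + (derivative^[3] p).eval (x + 2 * h)) * h ^ 3
    = 60 * (-p.eval (x - 2 * h) + 2 * p.eval (x - h) - 2 * p.eval (x + h)
        + p.eval (x + 2 * h)) := by
  rw [eq_sum_range_C_mul_X_sub_C_pow (natDegree_le_of_degree_le hp) x]
  simp only [iterate_derivative_sum, eval_finsetSum, eval_iterate_derivative_C_mul_X_sub_C_pow,
    eval_mul, eval_C, eval_pow, eval_sub, eval_X]
  simp only [sum_range_succ, sum_range_zero]
  norm_num [Nat.descFactorial]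
  ring

theorem quintic_spline_identity_2_11 (h t : ℝ) (hh : 0 < h)
    (p₁ p₂ p₃ p₄ : Polynomial ℝ)
    (hp₁ : p₁.degree ≤ 5) (hp₂ : p₂.degree ≤ 5)
    (hp₃ : p₃.degree ≤ 5) (hp₄ : p₄.degree ≤ 5)
    (hjoin₁ : ∀ r : ℕ, r ≤ 4 →
      (derivative^[r] p₁).eval (t + (-1 : ℝ) * h) = (derivative^[r] p₂).eval (t + (-1 : ℝ) * h))
    (hjoin₂ : ∀ r : ℕ, r ≤ 4 →
      (derivative^[r] p₂).eval (t + (0 : ℝ) * h) = (derivative^[r] p₃).eval (t + (0 : ℝ) * h))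
    (hjoin₃ : ∀ r : ℕ, r ≤ 4 →
      (derivative^[r] p₃).eval (t + (1 : ℝ) * h) = (derivative^[r] p₄).eval (t + (1 : ℝ) * h)) :
    (derivative^[3] p₁).eval (t + (-2 : ℝ) * h) + 26 * (derivative^[3] p₂).eval (t + (-1 : ℝ) * h)
        + 66 * (derivative^[3] p₃).eval (t + (0 : ℝ) * h) + 26 * (derivative^[3] p₄).eval (t + (1 : ℝ) * h)
        + (derivative^[3] p₄).eval (t + (2 : ℝ) * h)
      = (60 / h ^ 3) * (-p₁.eval (t + (-2 : ℝ) * h) + 2 * p₂.eval (t + (-1 : ℝ) * h)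
          - 2 * p₄.eval (t + (1 : ℝ) * h) + p₄.eval (t + (2 : ℝ) * h)) := by
  obtain ⟨a₁, rfl⟩ :=
    exists_eq_add_C_mul_X_sub_C_pow_of_iterate_derivative_eval_eq (n := 5) hp₁ hp₂
      fun r hr ↦ hjoin₁ r (by omega)
  obtain ⟨a₂, rfl⟩ :=
    exists_eq_add_C_mul_X_sub_C_pow_of_iterate_derivative_eval_eq (n := 5) hp₂ hp₃
      fun r hr ↦ hjoin₂ r (by omega)
  obtain ⟨a₃, rfl⟩ :=
    exists_eq_add_C_mul_X_sub_C_pow_of_iterate_derivative_eval_eq (n := 5) hp₃ hp₄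
      fun r hr ↦ hjoin₃ r (by omega)
  have hstencil := quintic_third_derivative_stencil hp₁ t h
  simp only [iterate_map_add, eval_add, eval_iterate_derivative_C_mul_X_sub_C_pow,
    eval_mul, eval_C, eval_pow, eval_sub, eval_X]
  norm_num [Nat.descFactorial] at hstencil ⊢
  field_simp
  linear_combination hstencil
end

section
/- Let h > 0 and t ∈ ℝ, and set t_j = t + j·h for j = −2, −1, 0, 1, 2. Let p₁, p₂, p₃, p₄ be real polynomials of degree at most 5 such that for every r = 0, 1, 2, 3, 4: the r-th derivatives of p₁ and p₂ agree at t₋₁, the r-th derivatives of p₂ and p₃ agree at t₀, and the r-th derivatives of p₃ and p₄ agree at t₁. Then p₃''(t₀) = (1/(32h))·(p₁'(t₋₂) + 32·p₂'(t₋₁) − 32·p₄'(t₁) − p₄'(t₂)) + (5/(32h²))·(p₁(t₋₂) + 16·p₂(t₋₁) − 34·p₃(t₀) + 16·p₄(t₁) + p₄(t₂)). -/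
/-!
Adjacent pieces agree to order 4 at their common knot, so each difference of pieces is a multiple
of `(X - tₖ)⁵`. Writing `p₁`, `p₂`, `p₄` as `p₃` plus such jumps, the right-hand side of (2.20)
becomes the same five-point formula applied to the single quintic `p₃`, where it is exact, plus
the contributions of the jumps, which cancel identically in `h`.
-/

open Polynomial

theorem Polynomial.eq_C_mul_X_sub_C_pow_of_iterate_derivative_eval_eq_zero
    {R : Type*} [CommRing R] [IsDomain R] [CharZero R] {p : R[X]} {n : ℕ} {s : R}
    (hp : p.natDegree ≤ n) (h : ∀ r < n, (derivative^[r] p).eval s = 0) :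
    ∃ c, p = C c * (X - C s) ^ n := by
  have hdvd : (X - C s) ^ n ∣ p := by
    rcases eq_or_ne p 0 with rfl | hp0
    · exact dvd_zero _
    cases n with
    | zero => exact one_dvd p
    | succ m =>
      exact (pow_dvd_pow _ (lt_rootMultiplicity_of_isRoot_iterate_derivative hp0
        fun r hr => h r (Nat.lt_succ_of_le hr))).trans (pow_rootMultiplicity_dvd p s)
  obtain ⟨q, rfl⟩ := hdvd
  rcases eq_or_ne q 0 with rfl | hq0
  · exact ⟨0, by simp⟩
  have hq : q.natDegree = 0 := by
    rw [(monic_X_sub_C s).pow n |>.natDegree_mul' hq0, (monic_X_sub_C s).natDegree_pow,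
      natDegree_X_sub_C] at hp
    omega
  exact ⟨q.coeff 0, by rw [mul_comm, ← eq_C_of_natDegree_eq_zero hq]⟩

theorem Polynomial.exists_eq_add_C_mul_X_sub_C_pow_of_iterate_derivative_eval_eq_s13
    {R : Type*} [CommRing R] [IsDomain R] [CharZero R] {p q : R[X]} {n : ℕ} {s : R}
    (hp : p.natDegree ≤ n) (hq : q.natDegree ≤ n)
    (h : ∀ r < n, (derivative^[r] p).eval s = (derivative^[r] q).eval s) :
    ∃ c, p = q + C c * (X - C s) ^ n := by
  obtain ⟨c, hc⟩ := eq_C_mul_X_sub_C_pow_of_iterate_derivative_eval_eq_zero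
    ((natDegree_sub_le p q).trans (max_le hp hq))
    fun r hr => by rw [iterate_derivative_sub, eval_sub, h r hr, sub_self]
  exact ⟨c, eq_add_of_sub_eq' hc⟩

theorem Polynomial.quintic_second_derivative_stencil {R : Type*} [CommRing R] {p : R[X]}
    (hp : p.natDegree ≤ 5) (t h : R) :
    32 * h ^ 2 * (derivative^[2] p).eval t
      = h * ((derivative p).eval (t + (-2) * h) + 32 * (derivative p).eval (t + (-1) * h)
          - 32 * (derivative p).eval (t + 1 * h) - (derivative p).eval (t + 2 * h))
        + 5 * (p.eval (t + (-2) * h) + 16 * p.eval (t + (-1) * h)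
          - 34 * p.eval t + 16 * p.eval (t + 1 * h) + p.eval (t + 2 * h)) := by
  rw [as_sum_range_C_mul_X_pow' p (Nat.lt_succ_of_le hp)]
  simp only [Finset.sum_range_succ, Finset.sum_range_zero, Function.iterate_succ_apply,
    Function.iterate_zero_apply, derivative_add, derivative_zero, derivative_C_mul,
    derivative_X_pow, eval_add, eval_mul, eval_C, eval_pow, eval_X, eval_zero]
  push_cast
  ring

theorem quintic_spline_identity_2_20 (h t : ℝ) (hh : 0 < h)
    (p₁ p₂ p₃ p₄ : Polynomial ℝ)
    (hp₁ : p₁.degree ≤ 5) (hp₂ : p₂.degree ≤ 5)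
    (hp₃ : p₃.degree ≤ 5) (hp₄ : p₄.degree ≤ 5)
    (hjoin₁ : ∀ r : ℕ, r ≤ 4 →
      (derivative^[r] p₁).eval (t + (-1 : ℝ) * h) = (derivative^[r] p₂).eval (t + (-1 : ℝ) * h))
    (hjoin₂ : ∀ r : ℕ, r ≤ 4 →
      (derivative^[r] p₂).eval (t + (0 : ℝ) * h) = (derivative^[r] p₃).eval (t + (0 : ℝ) * h))
    (hjoin₃ : ∀ r : ℕ, r ≤ 4 →
      (derivative^[r] p₃).eval (t + (1 : ℝ) * h) = (derivative^[r] p₄).eval (t + (1 : ℝ) * h)) :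
    (derivative^[2] p₃).eval (t + (0 : ℝ) * h)
      = (1 / (32 * h)) * ((derivative p₁).eval (t + (-2 : ℝ) * h) + 32 * (derivative p₂).eval (t + (-1 : ℝ) * h)
          - 32 * (derivative p₄).eval (t + (1 : ℝ) * h) - (derivative p₄).eval (t + (2 : ℝ) * h))
        + (5 / (32 * h ^ 2)) * (p₁.eval (t + (-2 : ℝ) * h) + 16 * p₂.eval (t + (-1 : ℝ) * h)
          - 34 * p₃.eval (t + (0 : ℝ) * h) + 16 * p₄.eval (t + (1 : ℝ) * h) + p₄.eval (t + (2 : ℝ) * h)) := by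
  replace hp₁ := natDegree_le_of_degree_le hp₁
  replace hp₂ := natDegree_le_of_degree_le hp₂
  replace hp₃ := natDegree_le_of_degree_le hp₃
  replace hp₄ := natDegree_le_of_degree_le hp₄
  obtain ⟨c₁, rfl⟩ := exists_eq_add_C_mul_X_sub_C_pow_of_iterate_derivative_eval_eq_s13 hp₁ hp₂
    fun r hr => hjoin₁ r (Nat.le_of_lt_succ hr)
  obtain ⟨c₂, rfl⟩ := exists_eq_add_C_mul_X_sub_C_pow_of_iterate_derivative_eval_eq_s13 hp₂ hp₃
    fun r hr => hjoin₂ r (Nat.le_of_lt_succ hr)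
  obtain ⟨c₄, rfl⟩ := exists_eq_add_C_mul_X_sub_C_pow_of_iterate_derivative_eval_eq_s13 hp₄ hp₃
    fun r hr => (hjoin₃ r (Nat.le_of_lt_succ hr)).symm
  have stencil := quintic_second_derivative_stencil hp₃ t h
  simp only [derivative_add, derivative_C_mul, derivative_X_sub_C_pow, eval_add, eval_mul, eval_C,
    eval_pow, eval_sub, eval_X, zero_mul, add_zero] at stencil ⊢
  -- `field_simp` rewrites the evaluation points too, so `stencil` must be normalised alike.
  field_simp at stencil ⊢
  linear_combination stencil
end
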